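/- Let W be a real d1×d2 matrix with singular value decomposition W = U D V^T where D = diag(d_1,...,d_r) contains the singular values. For λ1 ≥ 0 and λ2 ≥ 0, the unique minimizer over Z of (1/2)‖Z−W‖_F² + λ1‖Z‖_N + (λ2/2)‖Z‖_F² is given by S(W;λ1,λ2) = U D_{λ1,λ2} V^T where D_{λ1,λ2} = diag((d_1−λ1)_+,...,(d_r−λ1)_+)/(1+λ2). -/

import Mathlib

open Matrix

noncomputable def frobNorm {m n : ℕ} (M : Matrix (Fin m) (Fin n) ℝ) : ℝ :=
  Real.sqrt (Matrix.trace (Mᵀ * M))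

noncomputable def nuclearNorm {m n : ℕ} (M : Matrix (Fin m) (Fin n) ℝ) : ℝ :=
  ∑ i, Real.sqrt ((Matrix.isHermitian_conjTranspose_mul_self M).eigenvalues i)

noncomputable def spectralNorm' {m n : ℕ} (M : Matrix (Fin m) (Fin n) ℝ) : ℝ :=
  ⨆ i, Real.sqrt ((Matrix.isHermitian_conjTranspose_mul_self M).eigenvalues i)

noncomputable def mip {m n : ℕ} (A B : Matrix (Fin m) (Fin n) ℝ) : ℝ :=
  Matrix.trace (Aᵀ * B)

/-! With `G = W - (1 + λ₂) S = U diag(min(dᵢ, λ₁)) Vᵀ`, completing the square gives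
`f Z - f S = (1 + λ₂)/2 ‖Z - S‖_F² + (λ₁ ‖Z‖_N - ⟨G, Z⟩) + (⟨G, S⟩ - λ₁ ‖S‖_N)`.
The middle term is nonnegative by the trace duality `⟨G, Z⟩ ≤ ‖G‖_op ‖Z‖_N` (proved from an SVD
of `Z`, built out of the spectral decomposition of `ZᵀZ`) together with `‖G‖_op ≤ λ₁`; the last one
is nonnegative because `⟨G, S⟩ = λ₁ ∑ sᵢ ≥ λ₁ ‖S‖_N` for `sᵢ = (dᵢ - λ₁)₊ / (1 + λ₂)`.
The first term is positive unless `Z = S`. -/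

open scoped Matrix.Norms.L2Operator

section FrobeniusInner

variable {m n : ℕ}

lemma mip_comm (A B : Matrix (Fin m) (Fin n) ℝ) : mip A B = mip B A := by
  rw [mip, mip, ← trace_transpose, transpose_mul, transpose_transpose]

lemma mip_sub_left (A B C : Matrix (Fin m) (Fin n) ℝ) :
    mip (A - B) C = mip A C - mip B C := by
  simp only [mip, transpose_sub, Matrix.sub_mul, trace_sub]

lemma mip_sub_right (A B C : Matrix (Fin m) (Fin n) ℝ) :
    mip A (B - C) = mip A B - mip A C := by
  simp only [mip, Matrix.mul_sub, trace_sub]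

lemma mip_smul_left (a : ℝ) (A B : Matrix (Fin m) (Fin n) ℝ) :
    mip (a • A) B = a * mip A B := by
  simp only [mip, transpose_smul, smul_mul, trace_smul, smul_eq_mul]

lemma mip_self_nonneg (A : Matrix (Fin m) (Fin n) ℝ) : 0 ≤ mip A A := by
  simpa [mip, conjTranspose_eq_transpose_of_trivial] using
    (posSemidef_conjTranspose_mul_self A).trace_nonneg

lemma mip_self_pos {A : Matrix (Fin m) (Fin n) ℝ} (hA : A ≠ 0) : 0 < mip A A := by
  refine (mip_self_nonneg A).lt_of_ne fun h => hA ?_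
  rw [← trace_conjTranspose_mul_self_eq_zero_iff, conjTranspose_eq_transpose_of_trivial]
  exact h.symm

lemma frobNorm_sq (A : Matrix (Fin m) (Fin n) ℝ) : frobNorm A ^ 2 = mip A A :=
  Real.sq_sqrt (mip_self_nonneg A)

lemma quadratic_objective_eq (W S Z : Matrix (Fin m) (Fin n) ℝ) (lam : ℝ) :
    frobNorm (Z - W) ^ 2 / 2 + lam / 2 * frobNorm Z ^ 2
      = frobNorm (S - W) ^ 2 / 2 + lam / 2 * frobNorm S ^ 2
        + (1 + lam) / 2 * frobNorm (Z - S) ^ 2 - mip (W - (1 + lam) • S) (Z - S) := by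
  simp only [frobNorm_sq, mip_sub_left, mip_sub_right, mip_smul_left,
    mip_comm W S, mip_comm W Z, mip_comm Z S]
  ring

lemma mip_mul_diagonal_mul {r : ℕ} {U : Matrix (Fin m) (Fin r) ℝ} {V : Matrix (Fin n) (Fin r) ℝ}
    (hU : Uᵀ * U = 1) (hV : Vᵀ * V = 1) (c s : Fin r → ℝ) :
    mip (U * diagonal c * Vᵀ) (U * diagonal s * Vᵀ) = ∑ i, c i * s i := by
  have : (U * diagonal c * Vᵀ)ᵀ * (U * diagonal s * Vᵀ) = V * diagonal (c * s) * Vᵀ := by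
    simp only [transpose_mul, transpose_transpose, diagonal_transpose, Matrix.mul_assoc]
    rw [← Matrix.mul_assoc Uᵀ, hU, Matrix.one_mul, ← Matrix.mul_assoc (diagonal c),
      diagonal_mul_diagonal]
    rfl
  rw [mip, this, trace_mul_comm, ← Matrix.mul_assoc, hV, Matrix.one_mul, trace_diagonal]
  rfl

end FrobeniusInner

section L2OpNorm

variable {l m n : Type*} [Fintype l] [Fintype m] [Fintype n] [DecidableEq n]

lemma l2_opNorm_transpose [DecidableEq m] (A : Matrix m n ℝ) : ‖Aᵀ‖ = ‖A‖ := by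
  rw [← conjTranspose_eq_transpose_of_trivial, l2_opNorm_conjTranspose]

lemma apply_le_l2_opNorm (A : Matrix m n ℝ) (i : m) (j : n) :
    A i j ≤ ‖A‖ := by
  have hcol := A.l2_opNorm_mulVec (EuclideanSpace.single j 1)
  have hentry := PiLp.norm_apply_le
    ((EuclideanSpace.equiv m ℝ).symm (A *ᵥ EuclideanSpace.single j (1 : ℝ))) i
  simp only [PiLp.ofLp_single, mulVec_single, MulOpposite.op_one, one_smul,
    PiLp.continuousLinearEquiv_symm_apply, PiLp.norm_single, norm_one, mul_one, col_apply,
    Real.norm_eq_abs] at hcol hentry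
  exact (le_abs_self _).trans (hentry.trans hcol)

lemma l2_opNorm_le_one_of_transpose_mul_self_le_one {A : Matrix m n ℝ}
    (h : ‖Aᵀ * A‖ ≤ 1) : ‖A‖ ≤ 1 := by
  rw [← conjTranspose_eq_transpose_of_trivial, l2_opNorm_conjTranspose_mul_self] at h
  nlinarith [norm_nonneg A]

lemma l2_opNorm_le_one_of_transpose_mul_self_eq_one {A : Matrix m n ℝ}
    (h : Aᵀ * A = 1) : ‖A‖ ≤ 1 := by
  refine l2_opNorm_le_one_of_transpose_mul_self_le_one ?_
  rw [h, ← diagonal_one, l2_opNorm_diagonal]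
  exact (pi_norm_le_iff_of_nonneg zero_le_one).mpr fun _ => by simp

lemma l2_opNorm_mul_diagonal_mul_le [DecidableEq l] {U : Matrix m l ℝ} {V : Matrix n l ℝ}
    (hU : ‖U‖ ≤ 1) (hV : ‖V‖ ≤ 1) {c : l → ℝ} {b : ℝ} (hb : 0 ≤ b) (hc : ∀ i, |c i| ≤ b) :
    ‖U * diagonal c * Vᵀ‖ ≤ b := by
  have hdiag : ‖(diagonal c : Matrix l l ℝ)‖ ≤ b := by
    rw [l2_opNorm_diagonal]
    exact (pi_norm_le_iff_of_nonneg hb).mpr hc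
  calc ‖U * diagonal c * Vᵀ‖ ≤ ‖U‖ * ‖(diagonal c : Matrix l l ℝ)‖ * ‖Vᵀ‖ :=
        (l2_opNorm_mul _ _).trans (mul_le_mul_of_nonneg_right (l2_opNorm_mul _ _) (norm_nonneg _))
    _ ≤ 1 * b * 1 := by
        rw [l2_opNorm_transpose]
        gcongr
    _ = b := by ring

lemma trace_mul_diagonal_le [DecidableEq l] (A : Matrix l l ℝ) {σ : l → ℝ} (hσ : ∀ j, 0 ≤ σ j) :
    trace (A * diagonal σ) ≤ ‖A‖ * ∑ j, σ j := by
  rw [Finset.mul_sum]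
  refine Finset.sum_le_sum fun j _ => ?_
  rw [diag_apply, mul_diagonal]
  exact mul_le_mul_of_nonneg_right (apply_le_l2_opNorm A j j) (hσ j)

end L2OpNorm

section SVD

variable {m n : ℕ}

lemma exists_svd_of_transpose_mul_self (Z : Matrix (Fin m) (Fin n) ℝ) {Q : Matrix (Fin n) (Fin n) ℝ}
    (hQ : Q * Qᵀ = 1) {σ : Fin n → ℝ}
    (hZQ : (Z * Q)ᵀ * (Z * Q) = diagonal (σ ^ 2)) :
    ∃ P : Matrix (Fin m) (Fin n) ℝ,
      Z = P * diagonal σ * Qᵀ ∧ ‖P‖ ≤ 1 ∧ mip (P * Qᵀ) Z = ∑ j, σ j := by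
  set A := Z * Q
  -- With `0⁻¹ = 0`, the columns of `P` where `σ` vanishes are zero, so `PᵀP` is a 0/1 diagonal.
  set P := A * diagonal σ⁻¹
  have hPP : Pᵀ * P = diagonal (σ⁻¹ * σ ^ 2 * σ⁻¹) := by
    simp only [P, transpose_mul, diagonal_transpose, Matrix.mul_assoc]
    rw [← Matrix.mul_assoc Aᵀ, hZQ, diagonal_mul_diagonal, diagonal_mul_diagonal]
    congr 1
    ext j
    simp only [Pi.mul_apply, mul_assoc]
  have hA : A = P * diagonal σ := by
    have hD : A - P * diagonal σ = A * diagonal (1 - σ⁻¹ * σ) := by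
      ext i j
      simp only [P, Matrix.sub_apply, mul_diagonal, Pi.sub_apply, Pi.one_apply, Pi.mul_apply]
      ring
    rw [← sub_eq_zero, ← conjTranspose_mul_self_eq_zero, conjTranspose_eq_transpose_of_trivial, hD,
      transpose_mul, diagonal_transpose, Matrix.mul_assoc, ← Matrix.mul_assoc Aᵀ, hZQ,
      diagonal_mul_diagonal, diagonal_mul_diagonal, diagonal_eq_zero]
    funext j
    rcases eq_or_ne (σ j) 0 with hj | hj <;> simp [hj]
  refine ⟨P, ?_, ?_, ?_⟩
  · calc Z = Z * (Q * Qᵀ) := by rw [hQ, Matrix.mul_one]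
      _ = P * diagonal σ * Qᵀ := by rw [← Matrix.mul_assoc, ← hA]
  · refine l2_opNorm_le_one_of_transpose_mul_self_le_one ?_
    rw [hPP, l2_opNorm_diagonal]
    refine (pi_norm_le_iff_of_nonneg zero_le_one).mpr fun j => ?_
    rcases eq_or_ne (σ j) 0 with hj | hj
    · simp [hj]
    · have h1 : (σ j)⁻¹ * σ j ^ 2 * (σ j)⁻¹ = 1 := by field_simp
      simp only [Pi.mul_apply, Pi.inv_apply, Pi.pow_apply, h1, norm_one, le_refl]
  · have : Pᵀ * A = diagonal (σ⁻¹ * σ ^ 2) := by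
      simp only [P, transpose_mul, diagonal_transpose, Matrix.mul_assoc, hZQ, diagonal_mul_diagonal]
      rfl
    rw [mip, transpose_mul, transpose_transpose, Matrix.mul_assoc, trace_mul_comm,
      Matrix.mul_assoc, this, trace_diagonal]
    refine Finset.sum_congr rfl fun j _ => ?_
    rcases eq_or_ne (σ j) 0 with hj | hj
    · simp [hj]
    · simp only [Pi.mul_apply, Pi.inv_apply, Pi.pow_apply]
      field_simp

lemma exists_svd (Z : Matrix (Fin m) (Fin n) ℝ) :
    ∃ (P : Matrix (Fin m) (Fin n) ℝ) (Q : Matrix (Fin n) (Fin n) ℝ) (σ : Fin n → ℝ),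
      Z = P * diagonal σ * Qᵀ ∧ (∀ j, 0 ≤ σ j) ∧ ‖P‖ ≤ 1 ∧ ‖Q‖ ≤ 1 ∧
      ∑ j, σ j = nuclearNorm Z ∧ mip (P * Qᵀ) Z = nuclearNorm Z := by
  set hZ := isHermitian_conjTranspose_mul_self Z
  set Q : Matrix (Fin n) (Fin n) ℝ := (hZ.eigenvectorUnitary : Matrix (Fin n) (Fin n) ℝ)
  set μ := hZ.eigenvalues
  have hQ : Qᵀ * Q = 1 := by
    rw [← conjTranspose_eq_transpose_of_trivial, ← star_eq_conjTranspose]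
    exact Unitary.coe_star_mul_self hZ.eigenvectorUnitary
  have hQ' : Q * Qᵀ = 1 := by
    rw [← conjTranspose_eq_transpose_of_trivial, ← star_eq_conjTranspose]
    exact Unitary.coe_mul_star_self hZ.eigenvectorUnitary
  have hspec : Zᵀ * Z = Q * diagonal μ * Qᵀ := by
    rw [← conjTranspose_eq_transpose_of_trivial, ← conjTranspose_eq_transpose_of_trivial,
      ← star_eq_conjTranspose, hZ.spectral_theorem, Unitary.conjStarAlgAut_apply]
    rfl
  set σ : Fin n → ℝ := fun j => √(μ j)
  have hZQ : (Z * Q)ᵀ * (Z * Q) = diagonal (σ ^ 2) := by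
    have hσ : σ ^ 2 = μ :=
      funext fun j => Real.sq_sqrt (eigenvalues_conjTranspose_mul_self_nonneg Z j)
    calc (Z * Q)ᵀ * (Z * Q) = Qᵀ * (Zᵀ * Z) * Q := by
          simp only [transpose_mul, Matrix.mul_assoc]
      _ = (Qᵀ * Q) * diagonal μ * (Qᵀ * Q) := by
          simp only [hspec, Matrix.mul_assoc]
      _ = diagonal (σ ^ 2) := by rw [hQ, hσ, Matrix.one_mul, Matrix.mul_one]
  obtain ⟨P, hdec, hP, hmip⟩ := exists_svd_of_transpose_mul_self Z hQ' hZQ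
  exact ⟨P, Q, σ, hdec, fun j => Real.sqrt_nonneg _, hP,
    l2_opNorm_le_one_of_transpose_mul_self_eq_one hQ, rfl, hmip⟩

end SVD

section NuclearNorm

variable {m n k : ℕ}

lemma nuclearNorm_nonneg (Z : Matrix (Fin m) (Fin n) ℝ) : 0 ≤ nuclearNorm Z :=
  Finset.sum_nonneg fun _ _ => Real.sqrt_nonneg _

lemma mip_mul_diagonal_mul_le (G : Matrix (Fin m) (Fin n) ℝ) {P : Matrix (Fin m) (Fin k) ℝ}
    {Q : Matrix (Fin n) (Fin k) ℝ} (hP : ‖P‖ ≤ 1) (hQ : ‖Q‖ ≤ 1) {σ : Fin k → ℝ}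
    (hσ : ∀ j, 0 ≤ σ j) :
    mip G (P * diagonal σ * Qᵀ) ≤ ‖G‖ * ∑ j, σ j := by
  have hcycle : mip G (P * diagonal σ * Qᵀ) = trace (Qᵀ * Gᵀ * P * diagonal σ) := by
    rw [mip, ← Matrix.mul_assoc, trace_mul_comm]
    simp only [Matrix.mul_assoc]
  have hnorm : ‖Qᵀ * Gᵀ * P‖ ≤ ‖G‖ :=
    calc ‖Qᵀ * Gᵀ * P‖ ≤ ‖Qᵀ‖ * ‖Gᵀ‖ * ‖P‖ :=
          (l2_opNorm_mul _ _).trans (mul_le_mul_of_nonneg_right (l2_opNorm_mul _ _) (norm_nonneg _))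
      _ ≤ 1 * ‖G‖ * 1 := by
          rw [l2_opNorm_transpose, l2_opNorm_transpose]
          gcongr
      _ = ‖G‖ := by ring
  rw [hcycle]
  exact (trace_mul_diagonal_le _ hσ).trans
    (mul_le_mul_of_nonneg_right hnorm (Finset.sum_nonneg fun j _ => hσ j))

theorem mip_le_l2_opNorm_mul_nuclearNorm (G Z : Matrix (Fin m) (Fin n) ℝ) :
    mip G Z ≤ ‖G‖ * nuclearNorm Z := by
  obtain ⟨P, Q, σ, hZ, hσ, hP, hQ, hsum, -⟩ := exists_svd Z
  rw [← hsum]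
  nth_rewrite 1 [hZ]
  exact mip_mul_diagonal_mul_le G hP hQ hσ

theorem nuclearNorm_mul_diagonal_mul_le {r : ℕ} {U : Matrix (Fin m) (Fin r) ℝ}
    {V : Matrix (Fin n) (Fin r) ℝ} (hU : ‖U‖ ≤ 1) (hV : ‖V‖ ≤ 1) {s : Fin r → ℝ}
    (hs : ∀ i, 0 ≤ s i) :
    nuclearNorm (U * diagonal s * Vᵀ) ≤ ∑ i, s i := by
  obtain ⟨P, Q, σ, -, -, hP, hQ, -, hmip⟩ := exists_svd (U * diagonal s * Vᵀ)
  have hPQ : ‖P * Qᵀ‖ ≤ 1 :=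
    (l2_opNorm_mul P Qᵀ).trans (mul_le_one₀ hP (norm_nonneg _) (by rwa [l2_opNorm_transpose]))
  calc nuclearNorm (U * diagonal s * Vᵀ) = mip (P * Qᵀ) (U * diagonal s * Vᵀ) := hmip.symm
    _ ≤ ‖P * Qᵀ‖ * ∑ i, s i := mip_mul_diagonal_mul_le _ hU hV hs
    _ ≤ ∑ i, s i := mul_le_of_le_one_left (Finset.sum_nonneg fun i _ => hs i) hPQ

end NuclearNorm

noncomputable def softThreshold (lam1 lam2 d : ℝ) : ℝ := max (d - lam1) 0 / (1 + lam2)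

section SoftThreshold

variable {lam1 lam2 : ℝ}

lemma softThreshold_nonneg (hl2 : 0 ≤ lam2) (d : ℝ) : 0 ≤ softThreshold lam1 lam2 d :=
  div_nonneg (le_max_right _ _) (by linarith)

lemma sub_mul_softThreshold (hl2 : 0 ≤ lam2) (d : ℝ) :
    d - (1 + lam2) * softThreshold lam1 lam2 d = min d lam1 := by
  rw [softThreshold, mul_div_cancel₀ _ (by linarith)]
  rcases le_total d lam1 with h | h
  · rw [max_eq_right (by linarith), min_eq_left h, sub_zero]
  · rw [max_eq_left (by linarith), min_eq_right h]
    ring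

lemma min_mul_softThreshold (d : ℝ) :
    min d lam1 * softThreshold lam1 lam2 d = lam1 * softThreshold lam1 lam2 d := by
  rcases le_total d lam1 with h | h
  · simp [softThreshold, max_eq_right (sub_nonpos.mpr h)]
  · rw [min_eq_right h]

lemma mul_diagonal_mul_sub_smul_softThreshold {m n r : ℕ} (U : Matrix (Fin m) (Fin r) ℝ)
    (V : Matrix (Fin n) (Fin r) ℝ) (hl2 : 0 ≤ lam2) (d : Fin r → ℝ) :
    U * diagonal d * Vᵀ - (1 + lam2) • (U * diagonal (fun i => softThreshold lam1 lam2 (d i)) * Vᵀ)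
      = U * diagonal (fun i => min (d i) lam1) * Vᵀ := by
  rw [← smul_mul, ← Matrix.mul_smul, ← Matrix.sub_mul, ← Matrix.mul_sub, ← diagonal_smul,
    diagonal_sub]
  congr 3
  funext i
  exact sub_mul_softThreshold hl2 (d i)

end SoftThreshold

/-- The scaled soft-thresholding SVD uniquely minimizes the spectrum elastic net objective. -/
theorem stmt0 {d1 d2 r : ℕ}
    (W : Matrix (Fin d1) (Fin d2) ℝ)
    (U : Matrix (Fin d1) (Fin r) ℝ) (V : Matrix (Fin d2) (Fin r) ℝ) (dv : Fin r → ℝ)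
    (hU : Uᵀ * U = 1) (hV : Vᵀ * V = 1) (hdv : ∀ i, 0 < dv i)
    (hW : W = U * Matrix.diagonal dv * Vᵀ)
    (lam1 lam2 : ℝ) (hl1 : 0 ≤ lam1) (hl2 : 0 ≤ lam2)
    (S : Matrix (Fin d1) (Fin d2) ℝ)
    (hS : S = U * Matrix.diagonal (fun i => max (dv i - lam1) 0 / (1 + lam2)) * Vᵀ) :
    ∀ Z : Matrix (Fin d1) (Fin d2) ℝ, Z ≠ S →
      frobNorm (S - W) ^ 2 / 2 + lam1 * nuclearNorm S + lam2 / 2 * frobNorm S ^ 2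
        < frobNorm (Z - W) ^ 2 / 2 + lam1 * nuclearNorm Z + lam2 / 2 * frobNorm Z ^ 2 := by
  intro Z hZS
  set s : Fin r → ℝ := fun i => softThreshold lam1 lam2 (dv i)
  have hUn := l2_opNorm_le_one_of_transpose_mul_self_eq_one hU
  have hVn := l2_opNorm_le_one_of_transpose_mul_self_eq_one hV
  set G := W - (1 + lam2) • S with hGdef
  have hG : G = U * diagonal (fun i => min (dv i) lam1) * Vᵀ := by
    rw [hGdef, hW, hS]
    exact mul_diagonal_mul_sub_smul_softThreshold U V hl2 dv
  have hGnorm : ‖G‖ ≤ lam1 := by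
    rw [hG]
    exact l2_opNorm_mul_diagonal_mul_le hUn hVn hl1 fun i =>
      abs_le.mpr ⟨by linarith [le_min (hdv i).le hl1], min_le_right _ _⟩
  have hGS : mip G S = lam1 * ∑ i, s i := by
    rw [hG, hS, mip_mul_diagonal_mul hU hV, Finset.mul_sum]
    exact Finset.sum_congr rfl fun i _ => min_mul_softThreshold (dv i)
  have hSN : nuclearNorm S ≤ ∑ i, s i := by
    rw [hS]
    exact nuclearNorm_mul_diagonal_mul_le hUn hVn fun i => softThreshold_nonneg hl2 (dv i)
  have hGZ : mip G Z ≤ lam1 * nuclearNorm Z :=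
    (mip_le_l2_opNorm_mul_nuclearNorm G Z).trans
      (mul_le_mul_of_nonneg_right hGnorm (nuclearNorm_nonneg Z))
  have hgap : 0 < (1 + lam2) / 2 * frobNorm (Z - S) ^ 2 := by
    rw [frobNorm_sq]
    have := mip_self_pos (sub_ne_zero.mpr hZS)
    positivity
  have hquad := quadratic_objective_eq W S Z lam2
  rw [mip_sub_right] at hquad
  linarith [mul_le_mul_of_nonneg_left hSN hl1]
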